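/- arXiv:0706.4436 — 2 statements merged into one kernel-verified Lean document; each statement's English description precedes it below -/
import Mathlib

section
/- Let D be a dense subspace of H and E a semispectral measure on ℝ such that E_φ is a determinate measure for every φ ∈ D. If E' is another semispectral measure whose moment operators agree with those of E (i.e. ∫ x^k dE'_{φ,ψ} = ∫ x^k dE_{φ,ψ} on the common domain for all k), then E' = E. -/
open MeasureTheory
open scoped InnerProductSpace

/-- A finite Borel measure on `ℝ` is determinate if it has all moments finite and is the
unique finite measure with that moment sequence. -/
def IsDeterminate (μ : Measure ℝ) : Prop :=
  (∀ k : ℕ, Integrable (fun x => x ^ k) μ) ∧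
    ∀ ν : Measure ℝ, IsFiniteMeasure ν → (∀ k : ℕ, Integrable (fun x => x ^ k) ν) →
      (∀ k : ℕ, ∫ x, x ^ k ∂ν = ∫ x, x ^ k ∂μ) → ν = μ

/-- Let `D` be a dense subspace of `H` and `E` a semispectral measure on `ℝ` such that `E_φ`
is a determinate measure for every `φ ∈ D`. If `E'` is another semispectral measure whose
moment operators agree with those of `E` on `D`, then `E' = E`. -/
theorem determinate_semispectral_unique_from_moments
    {H : Type*} [NormedAddCommGroup H] [InnerProductSpace ℂ H] [CompleteSpace H]
    (E E' : Set ℝ → (H →L[ℂ] H))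
    (hpos : ∀ B : Set ℝ, (E B).IsPositive) (hpos' : ∀ B : Set ℝ, (E' B).IsPositive)
    (Eμ E'μ : H → Measure ℝ)
    (hfin : ∀ φ : H, IsFiniteMeasure (Eμ φ)) (hfin' : ∀ φ : H, IsFiniteMeasure (E'μ φ))
    (hcompat : ∀ (φ : H) (B : Set ℝ), MeasurableSet B →
      (((Eμ φ B).toReal : ℂ) = ⟪φ, E B φ⟫_ℂ))
    (hcompat' : ∀ (φ : H) (B : Set ℝ), MeasurableSet B →
      (((E'μ φ B).toReal : ℂ) = ⟪φ, E' B φ⟫_ℂ))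
    (D : Submodule ℂ H) (hD : Dense (D : Set H))
    (hdet : ∀ φ ∈ D, IsDeterminate (Eμ φ))
    (hmom : ∀ k : ℕ, ∀ φ ∈ D, Integrable (fun x => x ^ k) (E'μ φ) ∧
      ∫ x, x ^ k ∂(E'μ φ) = ∫ x, x ^ k ∂(Eμ φ)) :
    ∀ B : Set ℝ, MeasurableSet B → E' B = E B := by
  intro B hB
  -- For φ in D, the measures agree by determinacy.
  have hmeas : ∀ φ ∈ D, E'μ φ = Eμ φ := by
    intro φ hφ
    exact (hdet φ hφ).2 (E'μ φ) (hfin' φ) (fun k => (hmom k φ hφ).1)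
      (fun k => (hmom k φ hφ).2)
  -- Hence the quadratic forms agree on D.
  have hinner : ∀ φ ∈ (D : Set H), ⟪φ, E' B φ⟫_ℂ = ⟪φ, E B φ⟫_ℂ := by
    intro φ hφ
    rw [← hcompat φ B hB, ← hcompat' φ B hB, hmeas φ hφ]
  -- The quadratic form of E' B - E B is continuous and vanishes on a dense set.
  set T : H →L[ℂ] H := E' B - E B with hT
  have hcont : Continuous fun φ : H => ⟪φ, T φ⟫_ℂ := by
    exact continuous_id.inner (T.continuous)
  have hzero : ∀ φ : H, ⟪φ, T φ⟫_ℂ = 0 := by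
    have : Set.EqOn (fun φ : H => ⟪φ, T φ⟫_ℂ) (fun _ => (0 : ℂ)) (D : Set H) := by
      intro φ hφ
      simp only [hT, ContinuousLinearMap.sub_apply, inner_sub_right]
      rw [hinner φ hφ]; ring
    have := Continuous.ext_on hD hcont continuous_const this
    exact fun φ => congrFun this φ
  have : T = 0 := by
    have h := (inner_map_self_eq_zero (T : H →ₗ[ℂ] H)).mp
      (fun x => by rw [← inner_conj_symm]; simp [hzero x])
    ext x
    have := congrFun (congrArg (fun f : H →ₗ[ℂ] H => f.toFun) h) x
    simpa using this
  have := sub_eq_zero.mp (hT ▸ this)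
  exact this
end

section
/- (Fréchet–Shohat) Let (μ_n) be probability measures on ℝ all having finite moments of all orders, such that M_k := lim_n ∫ x^k dμ_n exists for every k ∈ ℕ. If μ is a determinate probability measure with moments ∫ x^k dμ = M_k for all k, then μ_n converges weakly to μ. -/
/-!
Bounded second moments make `(μn)` tight, so by Prokhorov's theorem every subsequence has a
weakly convergent subsequence. Along it, a uniform bound `∫ x ^ (2k) ≤ C` lets one truncate
`x ^ k` at height `R` with an error at most `C / R`, uniformly in `n` and also for the limit (by
Fatou's lemma for weak convergence); hence the limit has moments `M k`, and determinacy
identifies it with `μ`. A relatively compact sequence whose only cluster point is `μ` converges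
to `μ`.
-/

open MeasureTheory Filter Topology Set

section Tightness

variable {E : Type*} [NormedAddCommGroup E] [MeasurableSpace E] [OpensMeasurableSpace E]

lemma measure_norm_gt_le_integral_norm_sq_div (μ : Measure E)
    (hint : Integrable (fun x => ‖x‖ ^ 2) μ) {r : ℝ} (hr : 0 < r) :
    μ {x | r < ‖x‖} ≤ ENNReal.ofReal ((∫ x, ‖x‖ ^ 2 ∂μ) / r ^ 2) := by
  have hr2 : 0 < r ^ 2 := by positivity
  have hsub : {x : E | r < ‖x‖} ⊆ {x | ENNReal.ofReal (r ^ 2) ≤ ENNReal.ofReal (‖x‖ ^ 2)} :=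
    fun x hx => ENNReal.ofReal_le_ofReal (pow_le_pow_left₀ hr.le (le_of_lt hx) 2)
  calc μ {x | r < ‖x‖}
      ≤ μ {x | ENNReal.ofReal (r ^ 2) ≤ ENNReal.ofReal (‖x‖ ^ 2)} := measure_mono hsub
    _ ≤ (∫⁻ x, ENNReal.ofReal (‖x‖ ^ 2) ∂μ) / ENNReal.ofReal (r ^ 2) :=
        meas_ge_le_lintegral_div (by fun_prop) (by simpa using hr.ne') ENNReal.ofReal_ne_top
    _ = ENNReal.ofReal ((∫ x, ‖x‖ ^ 2 ∂μ) / r ^ 2) := by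
        rw [ENNReal.ofReal_div_of_pos hr2,
          ofReal_integral_eq_lintegral_ofReal hint (Eventually.of_forall fun x => by positivity)]

lemma isTightMeasureSet_of_integral_norm_sq_le [ProperSpace E] {S : Set (Measure E)} {C : ℝ}
    (hint : ∀ μ ∈ S, Integrable (fun x => ‖x‖ ^ 2) μ) (hC : ∀ μ ∈ S, ∫ x, ‖x‖ ^ 2 ∂μ ≤ C) :
    IsTightMeasureSet S := by
  refine isTightMeasureSet_of_tendsto_measure_norm_gt ?_
  have hlim : Tendsto (fun r : ℝ => ENNReal.ofReal (C / r ^ 2)) atTop (𝓝 0) := by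
    rw [← ENNReal.ofReal_zero]
    exact ENNReal.tendsto_ofReal
      (tendsto_const_nhds.div_atTop (tendsto_pow_atTop two_ne_zero))
  refine tendsto_of_tendsto_of_tendsto_of_le_of_le' tendsto_const_nhds hlim
    (Eventually.of_forall fun r => zero_le) ?_
  filter_upwards [eventually_gt_atTop 0] with r hr
  refine iSup₂_le fun μ hμ => (measure_norm_gt_le_integral_norm_sq_div μ (hint μ hμ) hr).trans ?_
  exact ENNReal.ofReal_le_ofReal (div_le_div_of_nonneg_right (hC μ hμ) (by positivity))

end Tightness

lemma MeasureTheory.AEStronglyMeasurable.integrable_of_integrable_sq {α : Type*}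
    [MeasurableSpace α] {μ : Measure α} [IsFiniteMeasure μ] {f : α → ℝ}
    (hf : AEStronglyMeasurable f μ)
    (hf2 : Integrable (fun x => f x ^ 2) μ) : Integrable f μ :=
  ((memLp_two_iff_integrable_sq hf).2 hf2).integrable one_le_two

lemma abs_sub_max_neg_min_le_sq_div {R : ℝ} (hR : 0 < R) (y : ℝ) :
    |y - max (-R) (min R y)| ≤ y ^ 2 / R := by
  rw [le_div_iff₀ hR]
  rcases le_or_gt y R with h1 | h1
  · rcases le_or_gt (-R) y with h2 | h2
    · rw [min_eq_right h1, max_eq_right h2, sub_self, abs_zero, zero_mul]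
      positivity
    · rw [min_eq_right h1, max_eq_left h2.le, abs_of_neg (by linarith)]
      nlinarith
  · rw [min_eq_left h1.le, max_eq_right (by linarith), abs_of_pos (by linarith)]
    nlinarith

lemma abs_integral_sub_integral_max_neg_min_le {α : Type*} [MeasurableSpace α] {μ : Measure α}
    [IsFiniteMeasure μ] {f : α → ℝ} (hf : AEStronglyMeasurable f μ)
    (hf2 : Integrable (fun x => f x ^ 2) μ) {R : ℝ} (hR : 0 < R) :
    |∫ x, f x ∂μ - ∫ x, max (-R) (min R (f x)) ∂μ| ≤ (∫ x, f x ^ 2 ∂μ) / R := by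
  have hT : Integrable (fun x => max (-R) (min R (f x))) μ := by
    refine Integrable.of_bound (by fun_prop) R (Eventually.of_forall fun x => ?_)
    exact abs_le.2 ⟨le_max_left _ _, max_le (neg_le_self hR.le) (min_le_left _ _)⟩
  have hf1 := hf.integrable_of_integrable_sq hf2
  rw [← integral_sub hf1 hT, ← integral_div]
  exact abs_integral_le_integral_abs.trans <| integral_mono (hf1.sub hT).abs (hf2.div_const R)
    fun x => abs_sub_max_neg_min_le_sq_div hR (f x)

lemma tendsto_of_forall_approx {ι : Type*} {l : Filter ι} {u : ι → ℝ} {a : ℝ}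
    (h : ∀ ε > 0, ∃ (v : ι → ℝ) (b : ℝ), Tendsto v l (𝓝 b) ∧ (∀ i, |u i - v i| ≤ ε) ∧
      |a - b| ≤ ε) :
    Tendsto u l (𝓝 a) := by
  refine Metric.tendsto_nhds.2 fun ε hε => ?_
  obtain ⟨v, b, hv, huv, hab⟩ := h (ε / 3) (by positivity)
  filter_upwards [Metric.tendsto_nhds.1 hv (ε / 3) (by positivity)] with i hi
  rw [Real.dist_eq] at hi ⊢
  have := abs_sub_le (u i) (v i) a
  have := abs_sub_le (v i) b a
  have := huv i
  rw [abs_sub_comm] at hab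
  linarith

section WeakConvergence

variable {Ω : Type*} [MeasurableSpace Ω] [TopologicalSpace Ω] [OpensMeasurableSpace Ω]
  [HasOuterApproxClosed Ω] {ρ : ℕ → ProbabilityMeasure Ω} {ν : ProbabilityMeasure Ω}

lemma integrable_and_integral_le_of_tendsto (hρ : Tendsto ρ atTop (𝓝 ν)) {g : Ω → ℝ}
    (hg : Continuous g) (hg0 : 0 ≤ g) (hint : ∀ n, Integrable g (ρ n)) {D : ℝ}
    (hD : ∀ n, ∫ x, g x ∂(ρ n) ≤ D) :
    Integrable g ν ∧ ∫ x, g x ∂ν ≤ D := by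
  have hlint : ∫⁻ x, ENNReal.ofReal (g x) ∂ν ≤ ENNReal.ofReal D := by
    refine (lintegral_le_liminf_lintegral_of_forall_isOpen_measure_le_liminf_measure hg hg0
      fun G hG => ProbabilityMeasure.le_liminf_measure_open_of_tendsto hρ hG).trans ?_
    refine liminf_le_of_frequently_le' (Frequently.of_forall fun n => ?_)
    rw [← ofReal_integral_eq_lintegral_ofReal (hint n) (Eventually.of_forall hg0)]
    exact ENNReal.ofReal_le_ofReal (hD n)
  have hD0 : 0 ≤ D := (integral_nonneg hg0).trans (hD 0)
  refine ⟨⟨hg.aestronglyMeasurable, (hasFiniteIntegral_iff_ofReal (Eventually.of_forall hg0)).2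
    (hlint.trans_lt ENNReal.ofReal_lt_top)⟩, ?_⟩
  rw [integral_eq_lintegral_of_nonneg_ae (Eventually.of_forall hg0) hg.aestronglyMeasurable]
  exact ENNReal.toReal_le_of_le_ofReal hD0 hlint

lemma integrable_and_tendsto_integral_of_integral_sq_le (hρ : Tendsto ρ atTop (𝓝 ν))
    {f : Ω → ℝ} (hf : Continuous f) (hint : ∀ n, Integrable (fun x => f x ^ 2) (ρ n)) {D : ℝ}
    (hD : ∀ n, ∫ x, f x ^ 2 ∂(ρ n) ≤ D) :
    Integrable f ν ∧ Tendsto (fun n => ∫ x, f x ∂(ρ n)) atTop (𝓝 (∫ x, f x ∂ν)) := by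
  obtain ⟨hintν, hDν⟩ :=
    integrable_and_integral_le_of_tendsto hρ (hf.pow 2) (fun x => sq_nonneg (f x)) hint hD
  refine ⟨hf.aestronglyMeasurable.integrable_of_integrable_sq hintν,
    tendsto_of_forall_approx fun ε hε => ?_⟩
  obtain ⟨R, hR, hRε⟩ := ((eventually_gt_atTop 0).and
    ((tendsto_const_nhds.div_atTop tendsto_id).eventually (eventually_le_nhds hε))).exists
  let T : BoundedContinuousFunction Ω ℝ :=
    .ofNormedAddCommGroup (fun x => max (-R) (min R (f x))) (by fun_prop) R fun x =>
      abs_le.2 ⟨le_max_left _ _, max_le (neg_le_self hR.le) (min_le_left _ _)⟩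
  refine ⟨fun n => ∫ x, T x ∂(ρ n), ∫ x, T x ∂ν,
    ProbabilityMeasure.tendsto_iff_forall_integral_tendsto.1 hρ T, fun n => ?_, ?_⟩
  · exact (abs_integral_sub_integral_max_neg_min_le hf.aestronglyMeasurable (hint n) hR).trans
      ((div_le_div_of_nonneg_right (hD n) hR.le).trans hRε)
  · exact (abs_integral_sub_integral_max_neg_min_le hf.aestronglyMeasurable hintν hR).trans
      ((div_le_div_of_nonneg_right hDν hR.le).trans hRε)

end WeakConvergence

theorem frechet_shohat_general
    (μn : ℕ → Measure ℝ) (hprob : ∀ n, IsProbabilityMeasure (μn n))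
    (hint : ∀ n, ∀ k : ℕ, Integrable (fun x => x ^ k) (μn n))
    (M : ℕ → ℝ)
    (hlim : ∀ k : ℕ, Tendsto (fun n => ∫ x, x ^ k ∂(μn n)) atTop (𝓝 (M k)))
    (μ : Measure ℝ) (hμ : IsProbabilityMeasure μ)
    (hdet : ∀ ν : Measure ℝ, IsProbabilityMeasure ν →
      (∀ k : ℕ, Integrable (fun x => x ^ k) ν) →
      (∀ k : ℕ, ∫ x, x ^ k ∂ν = M k) → ν = μ) :
    ∀ f : ℝ → ℝ, Continuous f → (∃ K : ℝ, ∀ x, |f x| ≤ K) →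
      Tendsto (fun n => ∫ x, f x ∂(μn n)) atTop (𝓝 (∫ x, f x ∂μ)) := by
  rintro f hf ⟨K, hK⟩
  let P : ℕ → ProbabilityMeasure ℝ := fun n => ⟨μn n, hprob n⟩
  have hint_sq : ∀ n k, Integrable (fun x : ℝ => (x ^ k) ^ 2) (μn n) := fun n k => by
    simpa only [← pow_mul] using hint n (k * 2)
  have hbdd : ∀ k, ∃ D, ∀ n, ∫ x, (x ^ k) ^ 2 ∂(μn n) ≤ D := fun k => by
    obtain ⟨D, hD⟩ := (hlim (k * 2)).bddAbove_range
    exact ⟨D, fun n => by simpa only [← pow_mul] using hD (mem_range_self n)⟩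
  choose D hD using hbdd
  have hcpt : IsCompact (closure (range P)) := by
    refine isCompact_closure_of_isTightMeasureSet
      (isTightMeasureSet_of_integral_norm_sq_le (C := D 1) ?_ ?_)
    · rintro _ ⟨_, ⟨n, rfl⟩, rfl⟩
      simpa [sq_abs, P] using hint_sq n 1
    · rintro _ ⟨_, ⟨n, rfl⟩, rfl⟩
      simpa [sq_abs, P] using hD 1 n
  have hPμ : Tendsto P atTop (𝓝 ⟨μ, hμ⟩) := by
    refine hcpt.tendsto_nhds_of_unique_mapClusterPt
      (Eventually.of_forall fun n => subset_closure (mem_range_self n)) fun ν _ hν => ?_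
    obtain ⟨ψ, hψ, hPν⟩ := hν.tendsto_subseq
    have hmom k := integrable_and_tendsto_integral_of_integral_sq_le hPν (continuous_pow k)
      (fun j => hint_sq (ψ j) k) (fun j => hD k (ψ j))
    exact Subtype.ext <| hdet ν ν.2 (fun k => (hmom k).1) fun k =>
      tendsto_nhds_unique (hmom k).2 ((hlim k).comp hψ.tendsto_atTop)
  exact ProbabilityMeasure.tendsto_iff_forall_integral_tendsto.1 hPμ
    (.ofNormedAddCommGroup f hf K fun x => (Real.norm_eq_abs _).trans_le (hK x))

/-- (Fréchet–Shohat) Let `(μ_n)` be probability measures on `ℝ` all having finite moments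
of all orders, such that `M_k := lim_n ∫ x^k dμ_n` exists for every `k`. If `μ` is a
determinate probability measure with moments `∫ x^k dμ = M_k` for all `k`, then `μ_n`
converges weakly to `μ`. -/
theorem frechet_shohat
    (μn : ℕ → Measure ℝ) (hprob : ∀ n, IsProbabilityMeasure (μn n))
    (hint : ∀ n, ∀ k : ℕ, Integrable (fun x => x ^ k) (μn n))
    (M : ℕ → ℝ)
    (hlim : ∀ k : ℕ, Tendsto (fun n => ∫ x, x ^ k ∂(μn n)) atTop (𝓝 (M k)))
    (μ : Measure ℝ) (hμ : IsProbabilityMeasure μ)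
    (hμint : ∀ k : ℕ, Integrable (fun x => x ^ k) μ)
    (hμmom : ∀ k : ℕ, ∫ x, x ^ k ∂μ = M k)
    (hdet : ∀ ν : Measure ℝ, IsProbabilityMeasure ν →
      (∀ k : ℕ, Integrable (fun x => x ^ k) ν) →
      (∀ k : ℕ, ∫ x, x ^ k ∂ν = M k) → ν = μ) :
    ∀ f : ℝ → ℝ, Continuous f → (∃ K : ℝ, ∀ x, |f x| ≤ K) →
      Tendsto (fun n => ∫ x, f x ∂(μn n)) atTop (𝓝 (∫ x, f x ∂μ)) :=
  frechet_shohat_general μn hprob hint M hlim μ hμ hdet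
end
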